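/- arXiv:1412.3001 — 3 statements merged into one kernel-verified Lean document; each statement's English description precedes it below -/
import Mathlib

section
/- Let D be a finite set, let m ≥ 1, and let Ω be the set of all maps f : D → {W ∈ D⁺ : |W| ≤ m}. Let g ∈ Sym(D) have cycle type k_1, …, k_ℓ. Then the number of f ∈ Ω satisfying f ∘ g = φ_g ∘ f equals ∏_{i=1}^{ℓ} ( Σ_{k=1}^{m} ( Σ_{j | k_i} j·c(g, j) )^k ). -/
/-!
An equivariant map `f` (`f ∘ g = φ_g ∘ f`) satisfies `f (g^n r) = φ_{g^n} (f r)`, so it is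
determined by its values at one representative `r` of each cycle of `g`; conversely these values
may be chosen freely, subject only to `f r` being fixed by `φ_{g^K}`, where `K` is the length of
the cycle. A word is fixed by `φ_{g^K}` iff all its letters are fixed by `g^K`, i.e. lie on cycles
whose length divides `K`; there are `∑_{j ∣ K} j·c(g, j)` such letters. Taking the product over
the cycles, whose lengths are the cycle type, gives the formula.
-/

/-- The cycle type of a permutation of a finite set, *including* fixed points as
cycles of length `1`. -/
def fullCycleType {D : Type*} [Fintype D] [DecidableEq D] (g : Equiv.Perm D) : Multiset ℕ :=
  g.cycleType + Multiset.replicate (Fintype.card D - g.support.card) 1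

/-- The number of cycles of length `j` in the cycle decomposition of `g`
(fixed points counted as cycles of length `1`). -/
def cycleCount {D : Type*} [Fintype D] [DecidableEq D] (g : Equiv.Perm D) (j : ℕ) : ℕ :=
  Multiset.count j (fullCycleType g)

open Function Equiv Finset

namespace FreeSemigroup
variable {α β : Type*}

theorem map_mk (f : α → β) (a : α) (l : List α) : map f ⟨a, l⟩ = ⟨f a, l.map f⟩ := by
  induction l generalizing a with
  | nil => rfl
  | cons b l ih =>
    change map f (of a * ⟨b, l⟩) = _
    rw [map_mul, ih]
    rfl

theorem map_map (f : β → α) (h : α → β) (w : FreeSemigroup α) :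
    map f (map h w) = map (f ∘ h) w := by
  obtain ⟨a, l⟩ := w
  simp [map_mk]

theorem iterate_map (f : α → α) (n : ℕ) : (⇑(map f))^[n] = ⇑(map f^[n]) := by
  induction n with
  | zero => funext ⟨a, l⟩; simp [map_mk]
  | succ n ih => funext w; rw [iterate_succ_apply', ih, map_map, ← iterate_succ']

theorem map_eq_self_iff {f : α → α} {w : FreeSemigroup α} :
    map f w = w ↔ ∀ a ∈ w.head :: w.tail, f a = a := by
  obtain ⟨a, l⟩ := w
  simp only [map_mk, mk.injEq, List.mem_cons, forall_eq_or_imp]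
  exact and_congr_right fun _ => by simpa using List.map_eq_map_iff (f := f) (g := id) (l := l)

theorem isPeriodicPt_map_iff {f : α → α} {n : ℕ} {w : FreeSemigroup α} :
    IsPeriodicPt (map f) n w ↔ ∀ a ∈ w.head :: w.tail, IsPeriodicPt f n a := by
  rw [IsPeriodicPt, IsFixedPt, iterate_map, map_eq_self_iff]
  rfl

theorem map_injective {f : α → β} (hf : Injective f) : Injective (map f) := by
  rintro ⟨a, l⟩ ⟨b, l'⟩ h
  simp only [map_mk, mk.injEq] at h
  simp [hf h.1, (List.map_injective_iff.2 hf) h.2]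

def lengthLeEquivSigmaVector (m : ℕ) :
    {w : FreeSemigroup α // w.length ≤ m} ≃ Σ n : Fin m, List.Vector α (n + 1) where
  toFun w := ⟨⟨w.1.tail.length, w.2⟩, ⟨w.1.head :: w.1.tail, rfl⟩⟩
  invFun v := ⟨⟨v.2.head, v.2.tail.toList⟩, by simp [length]⟩
  left_inv _ := rfl
  right_inv := by
    rintro ⟨⟨n, hn⟩, ⟨_ | ⟨a, l⟩, hl⟩⟩
    · simp at hl
    · obtain rfl : l.length = n := by simpa using hl
      rfl

theorem natCard_length_le [Finite α] (m : ℕ) :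
    Nat.card {w : FreeSemigroup α // w.length ≤ m} = ∑ k ∈ Icc 1 m, Nat.card α ^ k := by
  have := Fintype.ofFinite α
  rw [Nat.card_congr (lengthLeEquivSigmaVector m), Nat.card_sigma]
  simp only [Nat.card_eq_fintype_card, card_vector]
  rw [Fin.sum_univ_eq_sum_range (fun n => Fintype.card α ^ (n + 1)), range_eq_Ico,
    sum_Ico_add' (fun k => Fintype.card α ^ k)]
  rfl

theorem natCard_length_le_forall_mem (p : α → Prop) (m : ℕ) :
    Nat.card {w : FreeSemigroup α // w.length ≤ m ∧ ∀ a ∈ w.head :: w.tail, p a}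
      = Nat.card {w : FreeSemigroup (Subtype p) // w.length ≤ m} := by
  refine (Nat.card_congr (Equiv.ofBijective (fun w => ⟨map Subtype.val w.1, by simpa using w.2,
    by obtain ⟨⟨a, l⟩, _⟩ := w; simpa [map_mk] using ⟨a.2, fun b hb _ => hb⟩⟩) ⟨?_, ?_⟩)).symm
  · intro w w' h
    exact Subtype.ext (map_injective Subtype.val_injective (congrArg Subtype.val h))
  · rintro ⟨⟨a, l⟩, hlen, hp⟩
    simp only [List.mem_cons, forall_eq_or_imp] at hp
    lift l to List (Subtype p) using hp.2
    exact ⟨⟨⟨⟨a, hp.1⟩, l⟩, by simpa [length] using hlen⟩, by simp [map_mk]⟩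

end FreeSemigroup

theorem Function.IsPeriodicPt.iterate_eq_iterate_of_iterate_eq {α β : Type*} {f : α → α}
    {τ : β → β} {r : α} {x : β} (hx : IsPeriodicPt τ (minimalPeriod f r) x)
    (hr : r ∈ periodicPts f) {a b : ℕ} (h : f^[a] r = f^[b] r) : τ^[a] x = τ^[b] x := by
  have hpos := minimalPeriod_pos_of_mem_periodicPts hr
  rw [← iterate_mod_minimalPeriod_eq, ← iterate_mod_minimalPeriod_eq (n := b),
    iterate_eq_iterate_iff_of_lt_minimalPeriod (Nat.mod_lt _ hpos) (Nat.mod_lt _ hpos)] at h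
  rw [← hx.iterate_mod_apply, h, hx.iterate_mod_apply]

namespace Equiv.Perm

section Finite

variable {D : Type*} [Finite D] (g : Perm D)

theorem minimalPeriod_pos (x : D) : 0 < minimalPeriod g x :=
  minimalPeriod_pos_of_mem_periodicPts (g.injective.mem_periodicPts x)

variable {g} in
theorem SameCycle.minimalPeriod_eq {x y : D} (h : g.SameCycle x y) :
    minimalPeriod g x = minimalPeriod g y := by
  obtain ⟨n, rfl⟩ := h.exists_nat_pow_eq
  rw [← iterate_eq_pow, minimalPeriod_apply_iterate (g.injective.mem_periodicPts x)]

theorem exists_iterate_out_eq (d : D) :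
    ∃ n, (⇑g)^[n] (⟦d⟧ : Quotient (SameCycle.setoid g)).out = d := by
  obtain ⟨n, hn⟩ := (Quotient.mk_out (s := SameCycle.setoid g) d).exists_nat_pow_eq
  exact ⟨n, by rwa [← coe_pow]⟩

variable {X : Type*} (τ : X → X) (P : X → Prop)

noncomputable def evalAtOrbitReps (f : {f : {f : D → X // ∀ d, P (f d)} // f.1 ∘ g = τ ∘ f.1})
    (q : Quotient (SameCycle.setoid g)) :
    {x : X // P x ∧ IsPeriodicPt τ (minimalPeriod g q.out) x} :=
  ⟨f.1.1 q.out, f.1.2 _,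
    (isPeriodicPt_minimalPeriod g q.out).map (semiconj_iff_comp_eq.2 f.2)⟩

theorem evalAtOrbitReps_bijective (hP : ∀ x, P x → P (τ x)) :
    Bijective (evalAtOrbitReps g τ P) := by
  have hper : ∀ d : D, d ∈ periodicPts g := g.injective.mem_periodicPts
  constructor
  · rintro ⟨⟨f, _⟩, hf⟩ ⟨⟨f', _⟩, hf'⟩ h
    have hsemi : Semiconj f g τ := semiconj_iff_comp_eq.2 hf
    have hsemi' : Semiconj f' g τ := semiconj_iff_comp_eq.2 hf'
    congr 2
    funext d
    obtain ⟨n, hn⟩ := exists_iterate_out_eq g d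
    rw [← hn, hsemi.iterate_right n _, hsemi'.iterate_right n _]
    exact congrArg (τ^[n] ·) (congrArg Subtype.val (congrFun h ⟦d⟧))
  · -- extend `w` along each cycle: well defined as `w q` has the period of the cycle `q`
    intro w
    choose n hn using exists_iterate_out_eq g
    refine ⟨⟨⟨fun d => τ^[n d] (w ⟦d⟧).1, fun d => Iterate.rec P (w ⟦d⟧).2.1 hP (n d)⟩, ?_⟩, ?_⟩
    · funext d
      simp only [comp_apply]
      have hq : (⟦g d⟧ : Quotient (SameCycle.setoid g)) = ⟦d⟧ :=
        Quotient.sound (sameCycle_apply_left.2 (SameCycle.refl g d))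
      rw [hq, ← iterate_succ_apply' τ]
      refine (w ⟦d⟧).2.2.iterate_eq_iterate_of_iterate_eq (hper _) ?_
      rw [iterate_succ_apply', hn d, ← hq, hn]
    · funext q
      apply Subtype.ext
      show τ^[n q.out] (w ⟦q.out⟧).1 = (w q).1
      have hr := hn q.out
      rw [congrArg Quotient.out (Quotient.out_eq q)] at hr
      rw [Quotient.out_eq]
      exact (w q).2.2.iterate_eq_iterate_of_iterate_eq (b := 0) (hper _) hr

end Finite

section Fintype

variable {D : Type*} [Fintype D] [DecidableEq D] (g : Perm D)

theorem minimalPeriod_eq_card_support_cycleOf {x : D} (hx : x ∈ g.support) :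
    minimalPeriod g x = #(g.cycleOf x).support := by
  have hdvd (n : ℕ) : minimalPeriod g x ∣ n ↔ #(g.cycleOf x).support ∣ n := by
    rw [← isPeriodicPt_iff_minimalPeriod_dvd, IsPeriodicPt, IsFixedPt, iterate_eq_pow,
      (g.isCycleOn_support_cycleOf x).pow_apply_eq (mem_support_cycleOf_iff.2 ⟨.refl g x, hx⟩)]
  exact Nat.dvd_antisymm ((hdvd _).2 dvd_rfl) ((hdvd _).1 dvd_rfl)

theorem card_filter_card_support_cycleOf_eq (j : ℕ) :
    #{x ∈ g.support | #(g.cycleOf x).support = j} = j * g.cycleType.count j := by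
  rw [card_eq_sum_card_fiberwise (f := g.cycleOf)
    (t := {c ∈ g.cycleFactorsFinset | #c.support = j}) fun x hx => by
      simp only [coe_filter, Set.mem_ofPred_eq] at hx ⊢
      exact ⟨cycleOf_mem_cycleFactorsFinset_iff.2 hx.1, hx.2⟩]
  have hfiber (c) (hc : c ∈ {c ∈ g.cycleFactorsFinset | #c.support = j}) :
      #{x ∈ {x ∈ g.support | #(g.cycleOf x).support = j} | g.cycleOf x = c} = j := by
    obtain ⟨hcg, hcj⟩ := mem_filter.1 hc
    rw [← hcj]
    congr 1
    ext x
    simp only [mem_filter]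
    constructor
    · rintro ⟨-, rfl⟩
      exact (eq_cycleOf_of_mem_cycleFactorsFinset_iff g _ hcg x).1 rfl
    · intro hx
      obtain rfl := cycle_is_cycleOf hx hcg
      exact ⟨⟨mem_cycleFactorsFinset_support_le hcg hx, rfl⟩, rfl⟩
  rw [sum_const_nat hfiber, mul_comm, cycleType_def, Multiset.count_map]
  simp only [card_def, filter_val, comp_apply, eq_comm]
  congr

theorem card_minimalPeriod_eq (j : ℕ) : #{x | minimalPeriod g x = j} = j * cycleCount g j := by
  rw [cycleCount, fullCycleType, Multiset.count_add, Multiset.count_replicate]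
  rcases eq_or_ne j 1 with rfl | hj
  · have hfix : ({x | minimalPeriod g x = 1} : Finset D) = g.supportᶜ := by
      ext x
      simp [minimalPeriod_eq_one_iff_isFixedPt, IsFixedPt]
    have hcount : g.cycleType.count 1 = 0 :=
      Multiset.count_eq_zero.2 fun h => by have := two_le_of_mem_cycleType h; omega
    rw [hfix, card_compl, hcount]
    simp
  · have hsupp : ({x | minimalPeriod g x = j} : Finset D)
        = {x ∈ g.support | #(g.cycleOf x).support = j} := by
      ext x
      by_cases hx : x ∈ g.support
      · simp [hx, minimalPeriod_eq_card_support_cycleOf g hx]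
      · have hfix : minimalPeriod g x = 1 := by
          simpa [minimalPeriod_eq_one_iff_isFixedPt, IsFixedPt] using hx
        simp [hx, hfix, hj.symm]
    rw [hsupp, card_filter_card_support_cycleOf_eq, if_neg (Ne.symm hj), add_zero]

theorem card_isPeriodicPt {K : ℕ} (hK : K ≠ 0) :
    Nat.card {x // IsPeriodicPt g K x} = ∑ j ∈ K.divisors, j * cycleCount g j := by
  simp_rw [isPeriodicPt_iff_minimalPeriod_dvd]
  rw [Nat.card_eq_fintype_card, Fintype.card_subtype,
    card_eq_sum_card_fiberwise (f := minimalPeriod g) (t := K.divisors)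
      fun x hx => by simpa [hK] using hx]
  refine sum_congr rfl fun j hj => ?_
  rw [← card_minimalPeriod_eq, filter_filter]
  congr 1
  exact filter_congr fun x _ => and_iff_right_of_imp fun h => h ▸ Nat.dvd_of_mem_divisors hj

theorem card_sameCycle (r : D) : #{x | g.SameCycle r x} = minimalPeriod g r := by
  have horbit : ({x | g.SameCycle r x} : Finset D)
      = (range (minimalPeriod g r)).image (fun n => g^[n] r) := by
    ext x
    simp only [mem_filter, mem_univ, true_and, mem_image, mem_range]
    constructor
    · intro h
      obtain ⟨n, rfl⟩ := h.exists_nat_pow_eq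
      exact ⟨n % minimalPeriod g r, Nat.mod_lt _ (minimalPeriod_pos g r),
        by rw [iterate_mod_minimalPeriod_eq, iterate_eq_pow]⟩
    · rintro ⟨n, -, rfl⟩
      rw [iterate_eq_pow]
      exact sameCycle_pow_right.2 (.refl g r)
  rw [horbit, card_image_of_injOn, card_range]
  simpa using iterate_injOn_Iio_minimalPeriod

theorem card_minimalPeriod_eq_mul_card_orbits [Fintype (Quotient (SameCycle.setoid g))]
    (j : ℕ) :
    #{x | minimalPeriod g x = j}
      = j * #{q : Quotient (SameCycle.setoid g) | minimalPeriod g q.out = j} := by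
  classical
  rw [card_eq_sum_card_fiberwise (f := Quotient.mk (SameCycle.setoid g))
    (t := {q | minimalPeriod g q.out = j}) fun x hx => by
      simp only [coe_filter, mem_univ, true_and, Set.mem_ofPred_eq] at hx ⊢
      rw [(Quotient.mk_out (s := SameCycle.setoid g) x).minimalPeriod_eq, hx]]
  rw [sum_const_nat fun q hq => ?_, mul_comm]
  have hq : minimalPeriod g q.out = j := (mem_filter.1 hq).2
  have hfiber (x : D) : (minimalPeriod g x = j ∧ ⟦x⟧ = q) ↔ g.SameCycle q.out x := by
    rw [Quotient.mk_eq_iff_out]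
    exact ⟨fun h => SameCycle.symm h.2, fun h => ⟨h.minimalPeriod_eq.symm.trans hq, h.symm⟩⟩
  rw [filter_filter, filter_congr fun x _ => hfiber x, card_sameCycle, hq]

theorem map_minimalPeriod_out_eq_fullCycleType [Fintype (Quotient (SameCycle.setoid g))] :
    univ.val.map (fun q : Quotient (SameCycle.setoid g) => minimalPeriod g q.out)
      = fullCycleType g := by
  ext j
  have hcount : Multiset.count j (univ.val.map fun q : Quotient (SameCycle.setoid g) =>
      minimalPeriod g q.out)
        = #{q : Quotient (SameCycle.setoid g) | minimalPeriod g q.out = j} := by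
    simp only [Multiset.count_map, card_def, filter_val, eq_comm]
  rw [hcount]
  rcases j.eq_zero_or_pos with rfl | hj
  · have h0 : 0 ∉ fullCycleType g := by
      simp only [fullCycleType, Multiset.mem_add, Multiset.mem_replicate]
      rintro (h | ⟨-, h⟩)
      · exact absurd (two_le_of_mem_cycleType h) (by norm_num)
      · exact absurd h (by norm_num)
    rw [Multiset.count_eq_zero.2 h0, card_eq_zero, filter_eq_empty_iff]
    exact fun q _ => (minimalPeriod_pos g q.out).ne'
  · apply Nat.eq_of_mul_eq_mul_left hj
    rw [← card_minimalPeriod_eq_mul_card_orbits, card_minimalPeriod_eq]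
    rfl

end Fintype

end Equiv.Perm

theorem card_fixed_maps_eq_prod_general
    {D : Type*} [Fintype D] [DecidableEq D] {m : ℕ}
    (g : Equiv.Perm D) (ℓ : ℕ) (k : Fin ℓ → ℕ)
    (hk : Multiset.map k Finset.univ.val = fullCycleType g) :
    Nat.card {f : {f : D → FreeSemigroup D // ∀ x : D, (f x).length ≤ m} //
        f.1 ∘ ⇑g = ⇑(FreeSemigroup.map ⇑g) ∘ f.1}
      = ∏ i : Fin ℓ, ∑ kk ∈ Finset.Icc 1 m,
          (∑ j ∈ (k i).divisors, j * cycleCount g j) ^ kk := by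
  classical
  set F : ℕ → ℕ := fun K => ∑ kk ∈ Icc 1 m, (∑ j ∈ K.divisors, j * cycleCount g j) ^ kk
  have hfixedWords (K : ℕ) (hK : K ≠ 0) :
      Nat.card {W : FreeSemigroup D // W.length ≤ m ∧ IsPeriodicPt (FreeSemigroup.map g) K W}
        = F K := by
    simp_rw [FreeSemigroup.isPeriodicPt_map_iff]
    rw [FreeSemigroup.natCard_length_le_forall_mem, FreeSemigroup.natCard_length_le,
      g.card_isPeriodicPt hK]
  have hbij := g.evalAtOrbitReps_bijective (FreeSemigroup.map g) (·.length ≤ m)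
    fun W hW => by simpa using hW
  rw [Nat.card_congr (Equiv.ofBijective _ hbij), Nat.card_pi]
  calc ∏ q, Nat.card _
      = ∏ q : Quotient (Perm.SameCycle.setoid g), F (minimalPeriod g q.out) :=
        prod_congr rfl fun q _ => hfixedWords _ (g.minimalPeriod_pos _).ne'
    _ = ((univ.val.map fun q : Quotient (Perm.SameCycle.setoid g) =>
          minimalPeriod g q.out).map F).prod := by rw [Multiset.map_map]; rfl
    _ = ∏ i, F (k i) := by
        rw [g.map_minimalPeriod_out_eq_fullCycleType, ← hk, Multiset.map_map]; rfl

/-- If `g ∈ Sym(D)` has cycle type `k₁, …, k_ℓ`, then the number of `f ∈ Ω`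
(maps `f : D → {W ∈ D⁺ : |W| ≤ m}`) with `f ∘ g = φ_g ∘ f` is
`∏_{i=1}^ℓ (Σ_{k=1}^m (Σ_{j ∣ kᵢ} j·c(g,j))^k)`. -/
theorem card_fixed_maps_eq_prod
    {D : Type*} [Fintype D] [DecidableEq D] {m : ℕ} (hm : 1 ≤ m)
    (g : Equiv.Perm D) (ℓ : ℕ) (k : Fin ℓ → ℕ)
    (hk : Multiset.map k Finset.univ.val = fullCycleType g) :
    Nat.card {f : {f : D → FreeSemigroup D // ∀ x : D, (f x).length ≤ m} //
        f.1 ∘ ⇑g = ⇑(FreeSemigroup.map ⇑g) ∘ f.1}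
      = ∏ i : Fin ℓ, ∑ kk ∈ Finset.Icc 1 m,
          (∑ j ∈ (k i).divisors, j * cycleCount g j) ^ kk :=
  card_fixed_maps_eq_prod_general g ℓ k hk
end

section
/- Let D be a set with |D| = 2 and let m ≥ 1. Then the number of m-uniform endomorphisms on D⁺, up to combinatorial equivalence, equals (1/2)·(2^{2m} + 2^m). -/
/-!
Relabelling the letters by `g ∈ Perm D` acts on endomorphisms of `D⁺` by conjugation
`φ ↦ ĝ ∘ φ ∘ ĝ⁻¹`, and combinatorial equivalence classes of `m`-uniform endomorphisms are the
orbits of this action. For `D = {a, b}` the group is `{1, σ}` with `σ = (a b)`, so Burnside's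
lemma gives `2 · #orbits = #Fix 1 + #Fix σ`. An `m`-uniform endomorphism is an arbitrary choice of
two words of length `m`, so `#Fix 1 = 2^(2m)`; one commuting with `σ` is determined by the image
`w` of `a` (the image of `b` must be `σ(w)`), so `#Fix σ = 2^m`.
-/

open Equiv MulAction

theorem MulAction.card_orbitRel_quotient_mul_two {G X : Type*} [Group G] [MulAction G X]
    [Finite X] (hG : Nat.card G = 2) {σ : G} (hσ : σ ≠ 1) :
    Nat.card (orbitRel.Quotient G X) * 2 = Nat.card X + Nat.card (fixedBy X σ) := by
  classical
  have : Finite G := Nat.finite_of_card_ne_zero (by rw [hG]; norm_num)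
  have : Fintype G := Fintype.ofFinite G
  have huniv : (Finset.univ : Finset G) = {1, σ} := (Finset.eq_univ_of_card _ (by
    rw [Finset.card_pair hσ.symm, ← Nat.card_eq_fintype_card, hG])).symm
  rw [← hG, ← Nat.card_prod, ← Nat.card_congr (sigmaFixedByEquivOrbitsProdGroup G X),
    Nat.card_sigma, huniv, Finset.sum_pair hσ.symm, fixedBy_one_eq_univ, Nat.card_univ]

namespace FreeSemigroup

variable {α β γ : Type*}

theorem map_id : map (id : α → α) = MulHom.id _ := hom_ext rfl

theorem map_comp (g : β → γ) (f : α → β) : map (g ∘ f) = (map g).comp (map f) := hom_ext rfl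

theorem map_involutive {f : α → α} (hf : Function.Involutive f) : Function.Involutive (map f) :=
  fun w => by rw [← MulHom.comp_apply, ← map_comp, hf.comp_self, map_id, MulHom.id_apply]

theorem card_subtype_length_eq {m : ℕ} (hm : m ≠ 0) :
    Nat.card {w : FreeSemigroup α // w.length = m} = Nat.card α ^ m := by
  obtain ⟨n, rfl⟩ := Nat.exists_eq_succ_of_ne_zero hm
  let e : {w : FreeSemigroup α // w.length = n + 1} ≃ α × List.Vector α n :=
    { toFun w := (w.1.head, ⟨w.1.tail, Nat.succ_injective w.2⟩)
      invFun p := ⟨⟨p.1, p.2.1⟩, congrArg Nat.succ p.2.2⟩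
      left_inv _ := rfl
      right_inv _ := rfl }
  rw [Nat.card_congr (e.trans ((Equiv.refl α).prodCongr (Equiv.vectorEquivFin α n))),
    Nat.card_prod, Nat.card_fun, Nat.card_fin, pow_succ']

instance : MulAction (Perm α) (FreeSemigroup α →ₙ* FreeSemigroup α) where
  smul g φ := (map g).comp (φ.comp (map g.symm))
  one_smul φ := hom_ext <| funext fun d => by
    change map id (φ (of d)) = φ (of d)
    rw [map_id, MulHom.id_apply]
  mul_smul g h φ := hom_ext <| funext fun d => by
    change map (g ∘ h) _ = map g (map h _)
    rw [map_comp, MulHom.comp_apply]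
    rfl

theorem perm_smul_def (g : Perm α) (φ : FreeSemigroup α →ₙ* FreeSemigroup α) :
    g • φ = (map g).comp (φ.comp (map g.symm)) := rfl

theorem perm_smul_eq_iff (g : Perm α) (φ ψ : FreeSemigroup α →ₙ* FreeSemigroup α) :
    g • φ = ψ ↔ ψ.comp (map g) = (map g).comp φ := by
  constructor
  · rintro rfl
    refine hom_ext (funext fun d => ?_)
    simp [perm_smul_def]
  · intro h
    refine hom_ext (funext fun d => ?_)
    simpa [perm_smul_def] using (DFunLike.congr_fun h (of (g.symm d))).symm

theorem perm_smul_eq_self_iff (g : Perm α) (φ : FreeSemigroup α →ₙ* FreeSemigroup α) :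
    g • φ = φ ↔ ∀ d, φ (of (g d)) = map g (φ (of d)) := by
  rw [perm_smul_eq_iff]
  exact ⟨fun h d => DFunLike.congr_fun h (of d), fun h => hom_ext (funext h)⟩

def CombinatoriallyEquivalent (φ ψ : FreeSemigroup α →ₙ* FreeSemigroup α) : Prop :=
  ∃ g : Perm α, ψ.comp (map g) = (map g).comp φ

theorem combinatoriallyEquivalent_iff {φ ψ : FreeSemigroup α →ₙ* FreeSemigroup α} :
    CombinatoriallyEquivalent φ ψ ↔ ∃ g : Perm α, g • φ = ψ := by
  simp only [CombinatoriallyEquivalent, perm_smul_eq_iff]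

variable (α) in
def uniformEndos (m : ℕ) : SubMulAction (Perm α) (FreeSemigroup α →ₙ* FreeSemigroup α) where
  carrier := {φ | ∀ d, (φ (of d)).length = m}
  smul_mem' g φ hφ d := by simpa [perm_smul_def] using hφ (g.symm d)

variable {m : ℕ}

def uniformEndosEquiv : uniformEndos α m ≃ (α → {w : FreeSemigroup α // w.length = m}) :=
  (lift.symm.subtypeEquiv (q := fun f : α → FreeSemigroup α => ∀ d, (f d).length = m)
    fun _ => Iff.rfl).trans (subtypePiEquivPi (p := fun _ (w : FreeSemigroup α) => w.length = m))

theorem card_uniformEndos [Finite α] (hm : m ≠ 0) :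
    Nat.card (uniformEndos α m) = Nat.card α ^ (m * Nat.card α) := by
  rw [Nat.card_congr uniformEndosEquiv, Nat.card_fun, card_subtype_length_eq hm, pow_mul]

variable (α m) in
theorem card_quot_combinatoriallyEquivalent :
    Nat.card (Quot fun φ ψ : {φ : FreeSemigroup α →ₙ* FreeSemigroup α //
        ∀ d, (φ (of d)).length = m} => CombinatoriallyEquivalent φ.1 ψ.1) =
      Nat.card (orbitRel.Quotient (Perm α) (uniformEndos α m)) :=
  Nat.card_congr <| Quot.congr (subtypeEquivRight fun _ => Iff.rfl) fun φ ψ => by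
    rw [combinatoriallyEquivalent_iff, orbitRel_apply, mem_orbit_symm, mem_orbit_iff]
    simp only [Subtype.ext_iff, SubMulAction.val_smul]
    rfl

def fixedBySwapEquiv [DecidableEq α] {a b : α} (hab : a ≠ b) (hα : ∀ d, d = a ∨ d = b) :
    fixedBy (uniformEndos α m) (swap a b) ≃ {w : FreeSemigroup α // w.length = m} where
  toFun φ := ⟨φ.1.1 (of a), φ.1.2 a⟩
  invFun w := ⟨⟨lift fun d => if d = a then w.1 else map (swap a b) w.1, fun d => by
      by_cases h : d = a <;> simp [h, w.2]⟩, by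
    rw [mem_fixedBy, Subtype.ext_iff, SubMulAction.val_smul, perm_smul_eq_self_iff]
    intro d
    rcases hα d with rfl | rfl
    · simp [hab.symm]
    · simpa [hab.symm] using (map_involutive (swap_apply_self a d) w.1).symm⟩
  left_inv φ := by
    have hφ := (perm_smul_eq_self_iff _ _).1 (congrArg Subtype.val (mem_fixedBy.1 φ.2))
    refine Subtype.ext (Subtype.ext (hom_ext (funext fun d => ?_)))
    rcases hα d with rfl | rfl
    · simp
    · simpa [hab.symm] using (hφ a).symm
  right_inv w := by simp

end FreeSemigroup

open FreeSemigroup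

/-- If `|D| = 2` and `m ≥ 1`, the number of `m`-uniform endomorphisms on the free semigroup
`D⁺`, up to combinatorial equivalence, is `(1/2)·(2^{2m} + 2^m)`. -/
theorem number_of_classes_of_m_uniform_endomorphisms_card_two
    {D : Type*} [Fintype D] {m : ℕ} (hm : 1 ≤ m) (hcard : Fintype.card D = 2) :
    (Nat.card (Quot (fun φ ψ : {φ : FreeSemigroup D →ₙ* FreeSemigroup D //
          ∀ d : D, (φ (FreeSemigroup.of d)).length = m} =>
        ∃ g : Equiv.Perm D,
          (ψ : FreeSemigroup D →ₙ* FreeSemigroup D).comp (FreeSemigroup.map ⇑g)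
            = (FreeSemigroup.map ⇑g).comp
                (φ : FreeSemigroup D →ₙ* FreeSemigroup D))) : ℚ)
      = (1 / 2) * ((2 : ℚ) ^ (2 * m) + (2 : ℚ) ^ m) := by
  classical
  have hD : Nat.card D = 2 := Nat.card_eq_fintype_card.trans hcard
  obtain ⟨a, b, hab, hab_univ⟩ := Nat.card_eq_two_iff.1 hD
  have hm0 : m ≠ 0 := Nat.one_le_iff_ne_zero.1 hm
  have hX : Nat.card (uniformEndos D m) = 2 ^ (2 * m) := by
    rw [card_uniformEndos hm0, hD, mul_comm]
  have : Finite (uniformEndos D m) := Nat.finite_of_card_ne_zero (by simp [hX])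
  have hburnside := card_orbitRel_quotient_mul_two (X := uniformEndos D m)
    (by rw [Nat.card_perm, hD]; rfl) (swap_eq_one_iff.not.2 hab)
  have hD_pair : ∀ d, d = a ∨ d = b := fun d => by
    simpa using Set.eq_univ_iff_forall.1 hab_univ d
  rw [hX, Nat.card_congr (fixedBySwapEquiv hab hD_pair), card_subtype_length_eq hm0, hD]
    at hburnside
  refine (congrArg Nat.cast (card_quot_combinatoriallyEquivalent D m)).trans ?_
  have := congrArg (Nat.cast : ℕ → ℚ) hburnside
  push_cast at this
  linarith
end

section
/- Let D be a set with |D| = 3 and let m ≥ 1, and write A = (3^{m+1} − 1)/2. Then the number of m-endomorphisms on the free monoid D*, up to combinatorial equivalence, equals (1/6)·( A³ + 3(m+1)·A + 2·A ). -/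
/-!
Relabelling the alphabet by `g ∈ Sym(D)` acts on `m`-endomorphisms by `φ ↦ g ∘ φ ∘ g⁻¹`, and
combinatorial equivalence classes are the orbits, so Burnside's lemma counts them as the average
number of fixed points. An `m`-endomorphism is a choice of one of the `A = ∑_{i ≤ m} 3^i` words of
length `≤ m` for each letter, and it is fixed by `g` iff `φ(g d) = g(φ(d))` for every letter `d`.
So the identity fixes all `A³` of them; a transposition `(a b)` fixes `A·(m + 1)`, as `φ(a)` is
free, `φ(b) = g(φ(a))`, and `φ(t)` must be a `g`-fixed word, i.e. a power of the third letter `t`;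
a 3-cycle fixes `A`, as `φ(a)` is free and determines the rest, consistently because `g³ = 1`.
-/

open FreeMonoid MulAction Equiv

namespace FreeMonoid

variable {α β : Type*}

@[simp]
lemma length_map (f : α → β) (w : FreeMonoid α) : (map f w).length = w.length :=
  List.length_map _

lemma map_eq_self_iff {f : α → α} {w : FreeMonoid α} : map f w = w ↔ ∀ x ∈ w, f x = x := by
  change w.toList.map f = w.toList ↔ ∀ x ∈ w.toList, f x = x
  induction w.toList with
  | nil => simp
  | cons x l ih => simp [ih]

abbrev BoundedWords (α : Type*) (m : ℕ) := {w : FreeMonoid α // w.length ≤ m}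

def boundedWordsEquivSigma (α : Type*) (m : ℕ) :
    BoundedWords α m ≃ Σ i : Fin (m + 1), List.Vector α i where
  toFun w := ⟨⟨w.1.length, Nat.lt_succ_of_le w.2⟩, ⟨w.1.toList, rfl⟩⟩
  invFun v := ⟨ofList v.2.1, by simpa [length, v.2.2] using Nat.lt_succ_iff.mp v.1.2⟩
  left_inv _ := rfl
  right_inv := by
    rintro ⟨⟨i, _⟩, ⟨l, hl⟩⟩
    obtain rfl : l.length = i := hl
    rfl

instance [Finite α] (m : ℕ) : Finite (BoundedWords α m) :=
  .of_equiv _ (boundedWordsEquivSigma α m).symm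

lemma card_boundedWords [Finite α] (m : ℕ) :
    Nat.card (BoundedWords α m) = ∑ i ∈ Finset.range (m + 1), Nat.card α ^ i := by
  have := Fintype.ofFinite α
  rw [Nat.card_congr (boundedWordsEquivSigma α m), Nat.card_sigma,
    ← Fin.sum_univ_eq_sum_range (Nat.card α ^ ·)]
  simp [Nat.card_eq_fintype_card]

lemma card_boundedWords_forall_eq (t : α) (m : ℕ) :
    Nat.card {w : BoundedWords α m // ∀ x ∈ w.1, x = t} = m + 1 := by
  rw [← Nat.card_fin (m + 1)]
  refine Nat.card_congr
    { toFun w := ⟨w.1.1.length, Nat.lt_succ_of_le w.1.2⟩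
      invFun n := ⟨⟨ofList (List.replicate n t), by simpa [length] using Nat.lt_succ_iff.mp n.2⟩,
        fun x hx => List.eq_of_mem_replicate hx⟩
      left_inv w := Subtype.ext <| Subtype.ext <| Eq.symm <|
        List.eq_replicate_iff.mpr ⟨rfl, w.2⟩
      right_inv n := Fin.ext (by simp [length]) }

end FreeMonoid

lemma MulAction.sum_natCard_fixedBy_eq_natCard_orbits_mul_natCard (G X : Type*) [Group G]
    [Fintype G] [MulAction G X] [Finite X] :
    ∑ g : G, Nat.card (fixedBy X g) = Nat.card (orbitRel.Quotient G X) * Nat.card G := by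
  classical
  have := Fintype.ofFinite X
  simp only [Nat.card_eq_fintype_card]
  convert sum_card_fixedBy_eq_card_orbits_mul_card_group G X

lemma Equiv.Perm.sum_fin_three {M : Type*} [AddCommMonoid M] (f : Perm (Fin 3) → M) :
    ∑ g, f g = f 1 + f (swap 0 1) + f (swap 0 2) + f (swap 1 2) + f (finRotate 3)
      + f (finRotate 3)⁻¹ := by
  have huniv : (Finset.univ : Finset (Perm (Fin 3)))
      = {1, swap 0 1, swap 0 2, swap 1 2, finRotate 3, (finRotate 3)⁻¹} := by
    decide
  rw [huniv, Finset.sum_insert (by decide), Finset.sum_insert (by decide),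
    Finset.sum_insert (by decide), Finset.sum_insert (by decide), Finset.sum_insert (by decide),
    Finset.sum_singleton]
  abel

abbrev MEndo (D : Type*) (m : ℕ) :=
  {φ : FreeMonoid D →* FreeMonoid D // ∀ d : D, (φ (of d)).length ≤ m}

namespace MEndo

variable {D : Type*} {m : ℕ}

def equivFun (D : Type*) (m : ℕ) : MEndo D m ≃ (D → BoundedWords D m) where
  toFun φ d := ⟨φ.1 (of d), φ.2 d⟩
  invFun f := ⟨lift (fun d => (f d).1), fun d => (f d).2⟩
  left_inv _ := Subtype.ext (hom_eq fun _ => rfl)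
  right_inv _ := rfl

@[simp]
lemma equivFun_symm_apply_of (f : D → BoundedWords D m) (d : D) :
    ((equivFun D m).symm f).1 (of d) = (f d).1 := rfl

instance [Finite D] : Finite (MEndo D m) :=
  .of_equiv _ (equivFun D m).symm

instance : SMul (Perm D) (MEndo D m) :=
  ⟨fun g φ => ⟨(map ⇑g).comp (φ.1.comp (map ⇑g⁻¹)), fun d => by simpa using φ.2 _⟩⟩

lemma smul_apply_of (g : Perm D) (φ : MEndo D m) (d : D) :
    (g • φ).1 (of d) = map ⇑g (φ.1 (of (g⁻¹ d))) := rfl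

instance : MulAction (Perm D) (MEndo D m) where
  one_smul φ := Subtype.ext (hom_eq fun d => by simp [smul_apply_of])
  mul_smul g h φ := Subtype.ext (hom_eq fun d => by simp [smul_apply_of, map_map])

lemma smul_eq_iff {g : Perm D} {φ ψ : MEndo D m} :
    g • φ = ψ ↔ ψ.1.comp (map ⇑g) = (map ⇑g).comp φ.1 := by
  simp only [Subtype.ext_iff, FreeMonoid.hom_eq_iff, MonoidHom.comp_apply, map_of]
  refine ⟨fun h d => ?_, fun h d => ?_⟩
  · simp [← h, smul_apply_of]
  · simp [smul_apply_of, ← h]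

lemma orbitRel_iff {φ ψ : MEndo D m} :
    orbitRel (Perm D) (MEndo D m) φ ψ ↔
      ∃ g : Perm D, ψ.1.comp (map ⇑g) = (map ⇑g).comp φ.1 := by
  rw [orbitRel_apply, mem_orbit_iff]
  refine ⟨fun ⟨g, h⟩ => ⟨g⁻¹, smul_eq_iff.mp ?_⟩, fun ⟨g, h⟩ => ⟨g⁻¹, ?_⟩⟩
  · rw [← h, inv_smul_smul]
  · rw [← smul_eq_iff.mpr h, inv_smul_smul]

lemma mem_fixedBy_iff {g : Perm D} {φ : MEndo D m} :
    φ ∈ fixedBy (MEndo D m) g ↔ ∀ d, φ.1 (of (g d)) = map ⇑g (φ.1 (of d)) := by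
  simp [MulAction.mem_fixedBy, smul_eq_iff, FreeMonoid.hom_eq_iff]

lemma card_fixedBy_one [Finite D] :
    Nat.card (fixedBy (MEndo D m) (1 : Perm D)) = Nat.card (BoundedWords D m) ^ Nat.card D := by
  rw [fixedBy_one_eq_univ, Nat.card_congr (Equiv.Set.univ _), Nat.card_congr (equivFun D m),
    Nat.card_fun]

variable [DecidableEq D] {a b t : D}

lemma map_swap_eq_self_iff (hab : a ≠ b) (hat : a ≠ t) (hbt : b ≠ t)
    (hcov : ∀ d, d = a ∨ d = b ∨ d = t) {w : FreeMonoid D} :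
    map (swap a b) w = w ↔ ∀ x ∈ w, x = t := by
  rw [map_eq_self_iff]
  refine forall₂_congr fun x _ => ?_
  rw [← not_iff_not, ← Ne, swap_apply_ne_self_iff]
  rcases hcov x with rfl | rfl | rfl <;> simp [hab, hat, hbt, hbt.symm, hat.symm]

def fixedBySwapEquiv (hab : a ≠ b) (hat : a ≠ t) (hbt : b ≠ t)
    (hcov : ∀ d, d = a ∨ d = b ∨ d = t) :
    fixedBy (MEndo D m) (swap a b) ≃
      BoundedWords D m × {w : BoundedWords D m // ∀ x ∈ w.1, x = t} where
  toFun φ := (⟨φ.1.1 (of a), φ.1.2 a⟩, ⟨⟨φ.1.1 (of t), φ.1.2 t⟩, by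
    have h := mem_fixedBy_iff.mp φ.2 t
    rw [swap_apply_of_ne_of_ne hat.symm hbt.symm] at h
    exact (map_swap_eq_self_iff hab hat hbt hcov).mp h.symm⟩)
  invFun uv := ⟨(equivFun D m).symm fun d =>
      if d = a then uv.1 else if d = b then ⟨map (swap a b) uv.1.1, by simpa using uv.1.2⟩
      else uv.2.1, by
    have hu : map (swap a b) (map (swap a b) uv.1.1) = uv.1.1 := by
      rw [map_map, ← Perm.coe_mul, swap_mul_self, Perm.coe_one, map_id, MonoidHom.id_apply]
    have hv := (map_swap_eq_self_iff hab hat hbt hcov).mpr uv.2.2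
    refine mem_fixedBy_iff.mpr fun d => ?_
    rcases hcov d with rfl | rfl | rfl
      <;> simp [hab.symm, hat.symm, hbt.symm, swap_apply_of_ne_of_ne, hu, hv]⟩
  left_inv φ := by
    have hb := mem_fixedBy_iff.mp φ.2 a
    rw [swap_apply_left] at hb
    refine Subtype.ext (Subtype.ext (hom_eq fun d => ?_))
    rcases hcov d with rfl | rfl | rfl <;> simp [hab.symm, hat.symm, hbt.symm, hb]
  right_inv uv := by ext <;> simp [hat.symm, hbt.symm]

lemma card_fixedBy_swap (hab : a ≠ b) (hat : a ≠ t) (hbt : b ≠ t)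
    (hcov : ∀ d, d = a ∨ d = b ∨ d = t) :
    Nat.card (fixedBy (MEndo D m) (swap a b)) = Nat.card (BoundedWords D m) * (m + 1) := by
  rw [Nat.card_congr (fixedBySwapEquiv hab hat hbt hcov), Nat.card_prod,
    card_boundedWords_forall_eq]

def fixedByThreeCycleEquiv {c : Perm D} (hca : c a = b) (hcb : c b = t) (hct : c t = a)
    (hab : a ≠ b) (hat : a ≠ t) (hbt : b ≠ t) (hcov : ∀ d, d = a ∨ d = b ∨ d = t) :
    fixedBy (MEndo D m) c ≃ BoundedWords D m where
  toFun φ := ⟨φ.1.1 (of a), φ.1.2 a⟩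
  invFun u := ⟨(equivFun D m).symm fun d =>
      if d = a then u else if d = b then ⟨map c u.1, by simpa using u.2⟩
      else ⟨map c (map c u.1), by simpa using u.2⟩, by
    have hc : (⇑c ∘ ⇑c) ∘ ⇑c = id := funext fun x => by
      rcases hcov x with rfl | rfl | rfl <;> simp [hca, hcb, hct]
    have hu : map c (map c (map c u.1)) = u.1 := by
      rw [map_map, map_map, hc, map_id, MonoidHom.id_apply]
    refine mem_fixedBy_iff.mpr fun d => ?_
    rcases hcov d with rfl | rfl | rfl <;> simp [hca, hcb, hct, hab.symm, hat.symm, hbt.symm, hu]⟩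
  left_inv φ := by
    have hb := mem_fixedBy_iff.mp φ.2 a
    have ht := mem_fixedBy_iff.mp φ.2 b
    rw [hca] at hb
    rw [hcb] at ht
    refine Subtype.ext (Subtype.ext (hom_eq fun d => ?_))
    rcases hcov d with rfl | rfl | rfl <;> simp [hab.symm, hat.symm, hbt.symm, hb, ht]
  right_inv u := by simp

lemma card_fixedBy_threeCycle {c : Perm D} (hca : c a = b) (hcb : c b = t) (hct : c t = a)
    (hab : a ≠ b) (hat : a ≠ t) (hbt : b ≠ t) (hcov : ∀ d, d = a ∨ d = b ∨ d = t) :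
    Nat.card (fixedBy (MEndo D m) c) = Nat.card (BoundedWords D m) :=
  Nat.card_congr (fixedByThreeCycleEquiv hca hcb hct hab hat hbt hcov)

lemma sum_card_fixedBy_of_card_eq_three [Fintype D] (hD : Fintype.card D = 3) :
    ∑ g : Perm D, Nat.card (fixedBy (MEndo D m) g)
      = Nat.card (BoundedWords D m) ^ 3 + 3 * (Nat.card (BoundedWords D m) * (m + 1))
        + 2 * Nat.card (BoundedWords D m) := by
  obtain e : Fin 3 ≃ D := (Fintype.equivFinOfCardEq hD).symm
  have ne {i j : Fin 3} (h : i ≠ j) : e i ≠ e j := e.injective.ne h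
  have cover {i j k : Fin 3} (hij : i ≠ j) (hik : i ≠ k) (hjk : j ≠ k) (d : D) :
      d = e i ∨ d = e j ∨ d = e k := by
    obtain ⟨l, rfl⟩ := e.surjective d
    simp only [e.apply_eq_iff_eq]
    omega
  have swap_card {i j k : Fin 3} (hij : i ≠ j) (hik : i ≠ k) (hjk : j ≠ k) :
      Nat.card (fixedBy (MEndo D m) (e.permCongr (swap i j)))
        = Nat.card (BoundedWords D m) * (m + 1) := by
    rw [permCongr_def, symm_trans_swap_trans]
    exact card_fixedBy_swap (ne hij) (ne hik) (ne hjk) (cover hij hik hjk)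
  have cycle_card {c : Perm (Fin 3)} {i j k : Fin 3} (hci : c i = j) (hcj : c j = k)
      (hck : c k = i) (hij : i ≠ j) (hik : i ≠ k) (hjk : j ≠ k) :
      Nat.card (fixedBy (MEndo D m) (e.permCongr c)) = Nat.card (BoundedWords D m) :=
    card_fixedBy_threeCycle (by simp [hci]) (by simp [hcj]) (by simp [hck])
      (ne hij) (ne hik) (ne hjk) (cover hij hik hjk)
  rw [← e.permCongr.sum_comp, Perm.sum_fin_three]
  rw [Perm.one_def, permCongr_refl, ← Perm.one_def, card_fixedBy_one,
    Nat.card_eq_fintype_card (α := D), hD,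
    swap_card (k := 2) (by decide) (by decide) (by decide),
    swap_card (k := 1) (by decide) (by decide) (by decide),
    swap_card (k := 0) (by decide) (by decide) (by decide),
    cycle_card (i := 0) (j := 1) (k := 2) rfl rfl rfl (by decide) (by decide) (by decide),
    cycle_card (i := 0) (j := 2) (k := 1) rfl rfl rfl (by decide) (by decide) (by decide)]
  ring

end MEndo

open MEndo in
theorem number_of_classes_of_m_endomorphisms_free_monoid_card_three_general
    {D : Type*} [Fintype D] {m : ℕ} (hcard : Fintype.card D = 3) :
    (Nat.card (Quot (fun φ ψ : {φ : FreeMonoid D →* FreeMonoid D //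
          ∀ d : D, (φ (FreeMonoid.of d)).length ≤ m} =>
        ∃ g : Equiv.Perm D,
          (ψ : FreeMonoid D →* FreeMonoid D).comp (FreeMonoid.map ⇑g)
            = (FreeMonoid.map ⇑g).comp (φ : FreeMonoid D →* FreeMonoid D))) : ℚ)
      = (1 / 6) * ((((3 : ℚ) ^ (m + 1) - 1) / 2) ^ 3
          + 3 * (m + 1) * (((3 : ℚ) ^ (m + 1) - 1) / 2)
          + 2 * (((3 : ℚ) ^ (m + 1) - 1) / 2)) := by
  classical
  have hwords : (Nat.card (BoundedWords D m) : ℚ) = ((3 : ℚ) ^ (m + 1) - 1) / 2 := by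
    rw [card_boundedWords, Nat.card_eq_fintype_card, hcard]
    push_cast
    rw [geom_sum_eq (by norm_num) (m + 1)]
    norm_num
  have hburnside := sum_natCard_fixedBy_eq_natCard_orbits_mul_natCard (Perm D) (MEndo D m)
  rw [sum_card_fixedBy_of_card_eq_three hcard, Nat.card_perm, Nat.card_eq_fintype_card (α := D),
    hcard, Nat.factorial] at hburnside
  have hclasses : Nat.card (Quot _) = Nat.card (orbitRel.Quotient (Perm D) (MEndo D m)) :=
    Nat.card_congr (Quot.congrRight fun _ _ => orbitRel_iff.symm)
  rw [hclasses, ← hwords]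
  have hburnside_rat := congrArg (Nat.cast (R := ℚ)) hburnside
  push_cast at hburnside_rat
  linear_combination -hburnside_rat / 6

/-- If `|D| = 3` and `m ≥ 1`, then with `A = (3^{m+1} − 1)/2`, the number of
`m`-endomorphisms on the free monoid `D*`, up to combinatorial equivalence, is
`(1/6)·(A³ + 3(m+1)·A + 2·A)`. -/
theorem number_of_classes_of_m_endomorphisms_free_monoid_card_three
    {D : Type*} [Fintype D] {m : ℕ} (hm : 1 ≤ m) (hcard : Fintype.card D = 3) :
    (Nat.card (Quot (fun φ ψ : {φ : FreeMonoid D →* FreeMonoid D //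
          ∀ d : D, (φ (FreeMonoid.of d)).length ≤ m} =>
        ∃ g : Equiv.Perm D,
          (ψ : FreeMonoid D →* FreeMonoid D).comp (FreeMonoid.map ⇑g)
            = (FreeMonoid.map ⇑g).comp (φ : FreeMonoid D →* FreeMonoid D))) : ℚ)
      = (1 / 6) * ((((3 : ℚ) ^ (m + 1) - 1) / 2) ^ 3
          + 3 * (m + 1) * (((3 : ℚ) ^ (m + 1) - 1) / 2)
          + 2 * (((3 : ℚ) ^ (m + 1) - 1) / 2)) :=
  number_of_classes_of_m_endomorphisms_free_monoid_card_three_general hcard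
end
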